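/- arXiv:1710.07145 — 2 statements merged into one kernel-verified Lean document; each statement's English description precedes it below -/
import Mathlib

section
/- For any positive real r and any curve (rectifiable trajectory) of length x in the Euclidean plane, the set of points at distance at most r from some point of the trajectory has area at most 2rx + πr². -/
/-!
Sample the curve at the `N + 1` equally spaced parameters `i * x / N`. Since `γ` is 1-Lipschitz,
the neighbourhood lies in the union of the closed discs of radius `R = r + x / N` about the
samples, and consecutive centres are at most `x / N` apart. The first disc has area `π R²`, and
each further disc adds at most a lune `B(c', R) \ B(c, R)`, of area at most `2 R |c - c'|`: after a
rigid motion taking `c` to `0` and `c'` to the positive real axis, its horizontal slices are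
intervals of length at most `|c - c'|` at heights in `[-R, R]`. So the area is at most
`π R² + 2 R x`, and letting `N → ∞` gives the bound.
-/

open MeasureTheory Real

open Metric Set Filter Topology Module

theorem measure_biUnion_range_succ_le {α : Type*} [MeasurableSpace α] (μ : Measure α)
    (B : ℕ → Set α) (N : ℕ) :
    μ (⋃ i ∈ Finset.range (N + 1), B i) ≤ μ (B 0) + ∑ i ∈ Finset.range N, μ (B (i + 1) \ B i) := by
  induction N with
  | zero => simp
  | succ N ih =>
    have hsub : ⋃ i ∈ Finset.range (N + 2), B i ⊆
        (⋃ i ∈ Finset.range (N + 1), B i) ∪ (B (N + 1) \ B N) := by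
      rw [Finset.range_add_one, Finset.set_biUnion_insert]
      intro p hp
      rcases hp with hp | hp
      · by_cases hN : p ∈ B N
        · exact Or.inl (mem_biUnion (Finset.self_mem_range_succ N) hN)
        · exact Or.inr ⟨hp, hN⟩
      · exact Or.inl hp
    calc μ (⋃ i ∈ Finset.range (N + 2), B i)
        ≤ μ (⋃ i ∈ Finset.range (N + 1), B i) + μ (B (N + 1) \ B N) :=
          (measure_mono hsub).trans (measure_union_le _ _)
      _ ≤ _ := by
          rw [Finset.sum_range_succ, ← add_assoc]
          gcongr

theorem exists_nat_le_abs_sub_mul_div_le {t x : ℝ} (ht : t ∈ Icc 0 x) {N : ℕ} (hN : 0 < N) :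
    ∃ i ≤ N, |t - i * (x / N)| ≤ x / N := by
  have hN' : (0 : ℝ) < N := by exact_mod_cast hN
  rcases (ht.1.trans ht.2).eq_or_lt with hx | hx
  · exact ⟨0, N.zero_le, by simp [← hx, le_antisymm (hx ▸ ht.2) ht.1]⟩
  have hs : 0 ≤ t / (x / N) := by have := ht.1; positivity
  refine ⟨⌊t / (x / N)⌋₊, ?_, ?_⟩
  · have : t / (x / N) ≤ N := by
      rw [div_le_iff₀ (by positivity)]
      field_simp
      nlinarith [ht.2]
    exact_mod_cast (Nat.floor_le_floor this).trans (Nat.floor_natCast N).le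
  · have h₁ := Nat.floor_le hs
    have h₂ := Nat.lt_floor_add_one (t / (x / N))
    have hxN : 0 < x / N := by positivity
    rw [le_div_iff₀ hxN] at h₁
    rw [div_lt_iff₀ hxN] at h₂
    rw [abs_le]
    constructor <;> nlinarith

theorem mem_Icc_sqrt_of_sq_le_of_lt_sq {a b d R : ℝ} (hd : 0 ≤ d)
    (h₁ : (a - d) ^ 2 + b ^ 2 ≤ R ^ 2) (h₂ : R ^ 2 < a ^ 2 + b ^ 2) :
    a ∈ Icc √(R ^ 2 - b ^ 2) (√(R ^ 2 - b ^ 2) + d) := by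
  have ha : 0 ≤ a := by nlinarith
  constructor
  · exact (sqrt_le_left ha).2 (by linarith)
  · linarith [(le_abs_self (a - d)).trans (abs_le_sqrt (by linarith : (a - d) ^ 2 ≤ R ^ 2 - b ^ 2))]

theorem Complex.volume_closedBall_ofReal_diff_closedBall_zero_le (R : ℝ) {d : ℝ} (hd : 0 ≤ d) :
    volume (closedBall (d : ℂ) R \ closedBall 0 R) ≤ ENNReal.ofReal (2 * R * d) := by
  set L := closedBall (d : ℂ) R \ closedBall 0 R
  have hL : MeasurableSet L := measurableSet_closedBall.diff measurableSet_closedBall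
  have hmem : ∀ {a b : ℝ}, (⟨a, b⟩ : ℂ) ∈ L →
      0 ≤ R ∧ (a - d) ^ 2 + b ^ 2 ≤ R ^ 2 ∧ R ^ 2 < a ^ 2 + b ^ 2 := by
    intro a b ⟨h₁, h₂⟩
    simp only [mem_closedBall, Complex.dist_eq_re_im, Complex.ofReal_re, Complex.ofReal_im,
      Complex.zero_re, Complex.zero_im, sub_zero, sqrt_le_iff, not_and, not_le] at h₁ h₂
    exact ⟨h₁.1, h₁.2, h₂ h₁.1⟩
  have hslice : ∀ b : ℝ, volume {a : ℝ | (⟨a, b⟩ : ℂ) ∈ L} ≤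
      (Icc (-R) R).indicator (fun _ ↦ ENNReal.ofReal d) b := by
    intro b
    by_cases hb : b ∈ Icc (-R) R
    · rw [indicator_of_mem hb]
      calc volume {a : ℝ | (⟨a, b⟩ : ℂ) ∈ L}
          ≤ volume (Icc √(R ^ 2 - b ^ 2) (√(R ^ 2 - b ^ 2) + d)) := measure_mono fun a ha ↦
            mem_Icc_sqrt_of_sq_le_of_lt_sq hd (hmem ha).2.1 (hmem ha).2.2
        _ = ENNReal.ofReal d := by rw [Real.volume_Icc, add_sub_cancel_left]
    · have hempty : {a : ℝ | (⟨a, b⟩ : ℂ) ∈ L} = ∅ := eq_empty_of_forall_notMem fun a ha ↦ by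
        obtain ⟨hR, h₁, -⟩ := hmem ha
        exact hb (abs_le_of_sq_le_sq' (by nlinarith) hR)
      rw [indicator_of_notMem hb, hempty, measure_empty]
  rw [← Complex.volume_preserving_equiv_real_prod.symm.measure_preimage_equiv L,
    Measure.volume_eq_prod, Measure.prod_apply_symm (hL.preimage (MeasurableEquiv.measurable _))]
  calc ∫⁻ b, volume {a : ℝ | (⟨a, b⟩ : ℂ) ∈ L}
      ≤ ∫⁻ b, (Icc (-R) R).indicator (fun _ ↦ ENNReal.ofReal d) b := lintegral_mono hslice
    _ = ENNReal.ofReal (2 * R * d) := by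
      rw [lintegral_indicator_const measurableSet_Icc, Real.volume_Icc, ← ENNReal.ofReal_mul hd]
      ring_nf

theorem Complex.volume_closedBall_diff_closedBall_le (c₁ c₂ : ℂ) (R : ℝ) :
    volume (closedBall c₂ R \ closedBall c₁ R) ≤ ENNReal.ofReal (2 * R * dist c₁ c₂) := by
  let φ : ℂ ≃ᵢ ℂ := (rotation (Circle.exp (Complex.arg (c₂ - c₁)))).toIsometryEquiv.trans
    (IsometryEquiv.addLeft c₁)
  have hφ : MeasurePreserving φ :=
    (measurePreserving_add_left volume c₁).comp (rotation _).measurePreserving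
  have h₀ : c₁ = φ 0 := by simp [φ]
  have hd : c₂ = φ (dist c₁ c₂) := by
    have := Complex.norm_mul_exp_arg_mul_I (c₂ - c₁)
    simp only [φ, IsometryEquiv.trans_apply, LinearIsometryEquiv.coe_toIsometryEquiv,
      rotation_apply, Circle.coe_exp, IsometryEquiv.addLeft_apply, dist_comm c₁, Complex.dist_eq]
    linear_combination -this
  have hpre : φ ⁻¹' (closedBall c₂ R \ closedBall c₁ R) =
      closedBall (dist c₁ c₂ : ℂ) R \ closedBall 0 R := by
    rw [preimage_sdiff, φ.preimage_closedBall, φ.preimage_closedBall, φ.symm_apply_eq.2 hd,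
      φ.symm_apply_eq.2 h₀]
  rw [← hφ.measure_preimage
      (measurableSet_closedBall.diff measurableSet_closedBall).nullMeasurableSet, hpre]
  exact volume_closedBall_ofReal_diff_closedBall_zero_le R dist_nonneg

theorem natCast_mul_div_mem_Icc {x : ℝ} (hx : 0 ≤ x) {i N : ℕ} (hN : 0 < N) (hi : i ≤ N) :
    (i : ℝ) * (x / N) ∈ Icc 0 x := by
  have hN' : (0 : ℝ) < N := by exact_mod_cast hN
  refine ⟨by positivity, ?_⟩
  rw [mul_div_assoc', div_le_iff₀ hN', mul_comm x]
  exact mul_le_mul_of_nonneg_right (by exact_mod_cast hi) hx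

theorem setOf_exists_dist_le_subset_biUnion_closedBall {X : Type*} [PseudoMetricSpace X]
    {γ : ℝ → X} {x : ℝ} (hγ : LipschitzOnWith 1 γ (Icc 0 x)) (r : ℝ) {N : ℕ} (hN : 0 < N) :
    {p | ∃ t ∈ Icc 0 x, dist p (γ t) ≤ r} ⊆
      ⋃ i ∈ Finset.range (N + 1), closedBall (γ (i * (x / N))) (r + x / N) := by
  rintro p ⟨t, ht, hpt⟩
  obtain ⟨i, hi, hti⟩ := exists_nat_le_abs_sub_mul_div_le ht hN
  have hγt : dist (γ t) (γ (i * (x / N))) ≤ x / N := by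
    refine (hγ.dist_le_mul t ht _ (natCast_mul_div_mem_Icc (ht.1.trans ht.2) hN hi)).trans ?_
    simpa [Real.dist_eq] using hti
  exact mem_biUnion (Finset.mem_range.2 (Nat.lt_succ_of_le hi))
    ((dist_triangle _ _ _).trans (add_le_add hpt hγt))

section EuclideanPlane

variable {E : Type*} [NormedAddCommGroup E] [InnerProductSpace ℝ E] [FiniteDimensional ℝ E]
  [MeasurableSpace E] [BorelSpace E]

theorem volume_closedBall_diff_closedBall_le_of_finrank_eq_two (hE : finrank ℝ E = 2)
    (c₁ c₂ : E) (R : ℝ) :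
    volume (closedBall c₂ R \ closedBall c₁ R) ≤ ENNReal.ofReal (2 * R * dist c₁ c₂) := by
  let φ : ℂ ≃ₗᵢ[ℝ] E :=
    Complex.isometryOfOrthonormal ((stdOrthonormalBasis ℝ E).reindex (finCongr hE))
  rw [← φ.measurePreserving.measure_preimage
      (measurableSet_closedBall.diff measurableSet_closedBall).nullMeasurableSet,
    preimage_sdiff, φ.preimage_closedBall, φ.preimage_closedBall, ← φ.symm.dist_map]
  exact Complex.volume_closedBall_diff_closedBall_le _ _ R

theorem volume_closedBall_le_of_finrank_eq_two (hE : finrank ℝ E = 2) (c : E) {R : ℝ}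
    (hR : 0 ≤ R) : volume (closedBall c R) ≤ ENNReal.ofReal (π * R ^ 2) := by
  have : Nontrivial E := Module.nontrivial_of_finrank_eq_succ hE
  rw [InnerProductSpace.volume_closedBall_of_dim_even (k := 1) hE, hE]
  simp [← ENNReal.ofReal_pow hR, ← ENNReal.ofReal_mul pi_nonneg, mul_comm]

theorem volume_biUnion_closedBall_le_of_finrank_eq_two (hE : finrank ℝ E = 2) {N : ℕ}
    (c : ℕ → E) {R h : ℝ} (hR : 0 ≤ R) (hc : ∀ i < N, dist (c i) (c (i + 1)) ≤ h) :
    volume (⋃ i ∈ Finset.range (N + 1), closedBall (c i) R) ≤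
      ENNReal.ofReal (π * R ^ 2) + N * ENNReal.ofReal (2 * R * h) := by
  calc volume (⋃ i ∈ Finset.range (N + 1), closedBall (c i) R)
      ≤ volume (closedBall (c 0) R) +
          ∑ i ∈ Finset.range N, volume (closedBall (c (i + 1)) R \ closedBall (c i) R) :=
        measure_biUnion_range_succ_le _ _ N
    _ ≤ ENNReal.ofReal (π * R ^ 2) + ∑ _i ∈ Finset.range N, ENNReal.ofReal (2 * R * h) := by
        gcongr with i hi
        · exact volume_closedBall_le_of_finrank_eq_two hE _ hR
        · refine (volume_closedBall_diff_closedBall_le_of_finrank_eq_two hE _ _ R).trans ?_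
          gcongr
          exact hc i (Finset.mem_range.1 hi)
    _ = ENNReal.ofReal (π * R ^ 2) + N * ENNReal.ofReal (2 * R * h) := by
        rw [Finset.sum_const, Finset.card_range, nsmul_eq_mul]

theorem volume_setOf_exists_dist_le_le_of_finrank_eq_two (hE : finrank ℝ E = 2) {γ : ℝ → E}
    {x r : ℝ} (hγ : LipschitzOnWith 1 γ (Icc 0 x)) (hr : 0 ≤ r) (hx : 0 ≤ x) {N : ℕ}
    (hN : 0 < N) :
    volume {p | ∃ t ∈ Icc 0 x, dist p (γ t) ≤ r} ≤
      ENNReal.ofReal (2 * (r + x / N) * x + π * (r + x / N) ^ 2) := by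
  have hN' : (0 : ℝ) < N := by exact_mod_cast hN
  have hstep : ∀ i < N, dist (γ (i * (x / N))) (γ ((i + 1 : ℕ) * (x / N))) ≤ x / N := by
    intro i hi
    refine (hγ.dist_le_mul _ (natCast_mul_div_mem_Icc hx hN hi.le) _
      (natCast_mul_div_mem_Icc hx hN hi)).trans_eq ?_
    rw [Real.dist_eq, Nat.cast_succ, ← sub_mul, sub_add_cancel_left, neg_one_mul, abs_neg,
      abs_of_nonneg (by positivity), NNReal.coe_one, one_mul]
  calc volume {p | ∃ t ∈ Icc 0 x, dist p (γ t) ≤ r}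
      ≤ volume (⋃ i ∈ Finset.range (N + 1), closedBall (γ (i * (x / N))) (r + x / N)) :=
        measure_mono (setOf_exists_dist_le_subset_biUnion_closedBall hγ r hN)
    _ ≤ ENNReal.ofReal (π * (r + x / N) ^ 2) + N * ENNReal.ofReal (2 * (r + x / N) * (x / N)) :=
        volume_biUnion_closedBall_le_of_finrank_eq_two hE _ (by positivity) hstep
    _ = ENNReal.ofReal (2 * (r + x / N) * x + π * (r + x / N) ^ 2) := by
        rw [← ENNReal.ofReal_natCast, ← ENNReal.ofReal_mul hN'.le,
          ← ENNReal.ofReal_add (by positivity) (by positivity)]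
        congr 1
        field_simp
        ring

end EuclideanPlane

/-- The r-neighborhood of a rectifiable curve of length x (parametrized by arc length,
i.e. a 1-Lipschitz map on [0,x]) in the Euclidean plane has area at most 2rx + πr². -/
theorem neighborhood_area_le (r x : ℝ) (hr : 0 < r) (hx : 0 ≤ x)
    (γ : ℝ → EuclideanSpace ℝ (Fin 2)) (hγ : LipschitzOnWith 1 γ (Set.Icc 0 x)) :
    volume {p : EuclideanSpace ℝ (Fin 2) | ∃ t ∈ Set.Icc (0:ℝ) x, dist p (γ t) ≤ r}
      ≤ ENNReal.ofReal (2 * r * x + π * r ^ 2) := by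
  have hR : Tendsto (fun N : ℕ ↦ r + x / N) atTop (𝓝 r) := by
    simpa using (tendsto_const_div_atTop_nhds_zero_nat x).const_add r
  have hbound : Continuous fun R ↦ ENNReal.ofReal (2 * R * x + π * R ^ 2) :=
    ENNReal.continuous_ofReal.comp (by fun_prop)
  exact ge_of_tendsto ((hbound.tendsto r).comp hR) (eventually_atTop.2 ⟨1, fun N hN ↦
    volume_setOf_exists_dist_le_le_of_finrank_eq_two finrank_euclideanSpace_fin hγ hr.le hx hN⟩)
end

section
/- For every point p of the axis-aligned square of side 2k·2^{-j} centered at the origin, there exists a point on the spiral trajectory S(k,j) at distance less than 2^{-j} from p. -/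
/-- Direction of the n-th move of the spiral: E, S, W, N cyclically, two moves per length. -/
noncomputable def spiralDir (n : ℕ) : ℝ × ℝ :=
  if n % 4 = 0 then (1, 0) else if n % 4 = 1 then (0, -1)
  else if n % 4 = 2 then (-1, 0) else (0, 1)

/-- Vertices of the spiral S(·,j): the n-th move has length (⌊n/2⌋+1)·2^{-j}. -/
noncomputable def spiralVertex (j : ℕ) : ℕ → ℝ × ℝ
  | 0 => (0, 0)
  | n + 1 => spiralVertex j n + ((2:ℝ) ^ (-(j:ℤ)) * ((n / 2 : ℕ) + 1)) • spiralDir n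

/-- The spiral S(k,j) as a subset of the plane: the union of its 4k+4 segments. -/
noncomputable def spiralSet (k j : ℕ) : Set (ℝ × ℝ) :=
  ⋃ n ∈ Finset.range (4 * k + 4), segment ℝ (spiralVertex j n) (spiralVertex j (n + 1))

/-!
Write `ε = 2^{-j}`. The spiral is `ε` times the spiral `S(k,0)`, whose `m`-th turn runs along
`y = m` from `x = -m` to `m + 1`, then along `x = m + 1`, `y = -(m + 1)` and `x = -(m + 1)`.
Every integer point with `max (|a|, |b|) = m` lies on the turn `m` or `m - 1`, so `S(k,0)`
contains every integer point of `[-k, k]²`. Rounding both coordinates of `p / ε` to the nearest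
integer gives a point of the spiral within `ε / 2` of `p` in each coordinate, hence within
`ε / √2 < ε`.
-/

open Set

lemma round_le_round {α : Type*} [Field α] [LinearOrder α] [IsStrictOrderedRing α]
    [FloorRing α] {x y : α} (h : x ≤ y) : round x ≤ round y := by
  simpa only [round_eq] using Int.floor_le_floor (by linarith)

lemma abs_round_le_of_abs_le {α : Type*} [Field α] [LinearOrder α] [IsStrictOrderedRing α]
    [FloorRing α] {x : α} {n : ℤ} (h : |x| ≤ n) : |round x| ≤ n := by
  obtain ⟨hl, hu⟩ := abs_le.mp h
  have hl' := round_le_round (show ((-n : ℤ) : α) ≤ x by push_cast; exact hl)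
  rw [round_intCast] at hl'
  exact abs_le.mpr ⟨hl', by simpa using round_le_round hu⟩

lemma smul_mem_segment_smul {𝕜 E : Type*} [CommSemiring 𝕜] [PartialOrder 𝕜]
    [AddCommMonoid E] [Module 𝕜 E] (c : 𝕜) {x a b : E} (h : x ∈ segment 𝕜 a b) :
    c • x ∈ segment 𝕜 (c • a) (c • b) := by
  obtain ⟨s, t, hs, ht, hst, rfl⟩ := h
  exact ⟨s, t, hs, ht, hst, by simp only [smul_add, smul_comm c]⟩

lemma mk_mem_segment_left {x₀ x₁ x y : ℝ} (h₀ : x₀ ≤ x) (h₁ : x ≤ x₁) :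
    (x, y) ∈ segment ℝ (x₀, y) (x₁, y) := by
  rw [← Prod.image_mk_segment_left, segment_eq_Icc (h₀.trans h₁)]
  exact mem_image_of_mem _ ⟨h₀, h₁⟩

lemma mk_mem_segment_right {y₀ y₁ x y : ℝ} (h₀ : y₀ ≤ y) (h₁ : y ≤ y₁) :
    (x, y) ∈ segment ℝ (x, y₀) (x, y₁) := by
  rw [← Prod.image_mk_segment_right, segment_eq_Icc (h₀.trans h₁)]
  exact mem_image_of_mem _ ⟨h₀, h₁⟩

lemma spiralVertex_eq_smul (j n : ℕ) :
    spiralVertex j n = (2:ℝ) ^ (-(j:ℤ)) • spiralVertex 0 n := by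
  induction n with
  | zero => simp [spiralVertex]
  | succ n ih => simp [spiralVertex, ih, smul_add, smul_smul]

lemma smul_mem_spiralSet {k : ℕ} (j : ℕ) {x : ℝ × ℝ} (hx : x ∈ spiralSet k 0) :
    (2:ℝ) ^ (-(j:ℤ)) • x ∈ spiralSet k j := by
  simp only [spiralSet, mem_iUnion₂, spiralVertex_eq_smul j] at hx ⊢
  obtain ⟨n, hn, hx⟩ := hx
  exact ⟨n, hn, smul_mem_segment_smul _ hx⟩

lemma spiralVertex_zero_succ (n : ℕ) :
    spiralVertex 0 (n + 1) = spiralVertex 0 n + ((n / 2 : ℕ) + 1 : ℝ) • spiralDir n := by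
  simp [spiralVertex]

section
variable (m : ℕ)

lemma spiralDir_four_mul : spiralDir (4 * m) = (1, 0) := by
  simp [spiralDir]

lemma spiralDir_four_mul_add_one : spiralDir (4 * m + 1) = (0, -1) := by
  simp [spiralDir, show (4 * m + 1) % 4 = 1 by omega]

lemma spiralDir_four_mul_add_two : spiralDir (4 * m + 2) = (-1, 0) := by
  simp [spiralDir, show (4 * m + 2) % 4 = 2 by omega]

lemma spiralDir_four_mul_add_three : spiralDir (4 * m + 3) = (0, 1) := by
  simp [spiralDir, show (4 * m + 3) % 4 = 3 by omega]

lemma spiralVertex_zero_four_mul : spiralVertex 0 (4 * m) = (-(m : ℝ), (m : ℝ)) := by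
  induction m with
  | zero => simp [spiralVertex]
  | succ m ih =>
    rw [show 4 * (m + 1) = 4 * m + 3 + 1 by ring, spiralVertex_zero_succ, spiralVertex_zero_succ,
      spiralVertex_zero_succ, spiralVertex_zero_succ, ih, spiralDir_four_mul,
      spiralDir_four_mul_add_one, spiralDir_four_mul_add_two, spiralDir_four_mul_add_three,
      show 4 * m / 2 = 2 * m by omega, show (4 * m + 1) / 2 = 2 * m by omega,
      show (4 * m + 2) / 2 = 2 * m + 1 by omega, show (4 * m + 3) / 2 = 2 * m + 1 by omega]
    simp only [Prod.smul_mk, smul_eq_mul, Prod.mk_add_mk, Prod.mk.injEq]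
    push_cast
    constructor <;> ring

lemma spiralVertex_zero_four_mul_add_one :
    spiralVertex 0 (4 * m + 1) = ((m : ℝ) + 1, (m : ℝ)) := by
  rw [spiralVertex_zero_succ, spiralVertex_zero_four_mul, spiralDir_four_mul,
    show 4 * m / 2 = 2 * m by omega]
  simp only [Prod.smul_mk, smul_eq_mul, Prod.mk_add_mk, Prod.mk.injEq]
  push_cast
  constructor <;> ring

lemma spiralVertex_zero_four_mul_add_two :
    spiralVertex 0 (4 * m + 2) = ((m : ℝ) + 1, -((m : ℝ) + 1)) := by
  rw [spiralVertex_zero_succ, spiralVertex_zero_four_mul_add_one, spiralDir_four_mul_add_one,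
    show (4 * m + 1) / 2 = 2 * m by omega]
  simp only [Prod.smul_mk, smul_eq_mul, Prod.mk_add_mk, Prod.mk.injEq]
  push_cast
  constructor <;> ring

lemma spiralVertex_zero_four_mul_add_three :
    spiralVertex 0 (4 * m + 3) = (-((m : ℝ) + 1), -((m : ℝ) + 1)) := by
  rw [spiralVertex_zero_succ, spiralVertex_zero_four_mul_add_two, spiralDir_four_mul_add_two,
    show (4 * m + 2) / 2 = 2 * m + 1 by omega]
  simp only [Prod.smul_mk, smul_eq_mul, Prod.mk_add_mk, Prod.mk.injEq]
  push_cast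
  constructor <;> ring

lemma spiralVertex_zero_four_mul_add_four :
    spiralVertex 0 (4 * m + 4) = (-((m : ℝ) + 1), (m : ℝ) + 1) := by
  rw [show 4 * m + 4 = 4 * (m + 1) by ring, spiralVertex_zero_four_mul]
  push_cast
  rfl

end

lemma segment_spiralVertex_subset_spiralSet {k j n : ℕ} (hn : n < 4 * k + 4) :
    segment ℝ (spiralVertex j n) (spiralVertex j (n + 1)) ⊆ spiralSet k j :=
  subset_biUnion_of_mem (u := fun n ↦ segment ℝ (spiralVertex j n) (spiralVertex j (n + 1)))
    (Finset.mem_coe.2 (Finset.mem_range.2 hn))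

lemma intCast_mem_spiralSet_zero {k : ℕ} {a b : ℤ} (ha : |a| ≤ k) (hb : |b| ≤ k) :
    ((a : ℝ), (b : ℝ)) ∈ spiralSet k 0 := by
  rcases le_or_gt |a| |b| with hab | hba <;> simp only [abs_eq_max_neg] at *
  · rcases le_or_gt 0 b with hb₀ | hb₀
    · obtain ⟨m, rfl⟩ : ∃ m : ℕ, b = m := ⟨b.toNat, by omega⟩
      refine segment_spiralVertex_subset_spiralSet (n := 4 * m) (by omega) ?_
      rw [spiralVertex_zero_four_mul, spiralVertex_zero_four_mul_add_one]
      exact_mod_cast mk_mem_segment_left (y := (m : ℝ)) (x := (a : ℝ))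
        (by exact_mod_cast (by omega : -(m : ℤ) ≤ a))
        (by exact_mod_cast (by omega : a ≤ m + 1))
    · obtain ⟨m, rfl⟩ : ∃ m : ℕ, b = -(m + 1) := ⟨(-b - 1).toNat, by omega⟩
      refine segment_spiralVertex_subset_spiralSet (n := 4 * m + 2) (by omega) ?_
      rw [spiralVertex_zero_four_mul_add_two, spiralVertex_zero_four_mul_add_three, segment_symm]
      exact_mod_cast mk_mem_segment_left (y := -((m : ℝ) + 1)) (x := (a : ℝ))
        (by exact_mod_cast (by omega : -((m : ℤ) + 1) ≤ a))
        (by exact_mod_cast (by omega : a ≤ m + 1))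
  · rcases le_or_gt a 0 with ha₀ | ha₀
    · obtain ⟨m, rfl⟩ : ∃ m : ℕ, a = -(m + 1) := ⟨(-a - 1).toNat, by omega⟩
      refine segment_spiralVertex_subset_spiralSet (n := 4 * m + 3) (by omega) ?_
      rw [spiralVertex_zero_four_mul_add_three, spiralVertex_zero_four_mul_add_four]
      exact_mod_cast mk_mem_segment_right (x := -((m : ℝ) + 1)) (y := (b : ℝ))
        (by exact_mod_cast (by omega : -((m : ℤ) + 1) ≤ b))
        (by exact_mod_cast (by omega : b ≤ m + 1))
    · obtain ⟨m, rfl⟩ : ∃ m : ℕ, a = m + 1 := ⟨(a - 1).toNat, by omega⟩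
      refine segment_spiralVertex_subset_spiralSet (n := 4 * m + 1) (by omega) ?_
      rw [spiralVertex_zero_four_mul_add_one, spiralVertex_zero_four_mul_add_two, segment_symm]
      exact_mod_cast mk_mem_segment_right (x := (m : ℝ) + 1) (y := (b : ℝ))
        (by exact_mod_cast (by omega : -((m : ℤ) + 1) ≤ b))
        (by exact_mod_cast (by omega : b ≤ m))

lemma exists_int_abs_le_abs_sub_mul_le {ε x : ℝ} (hε : 0 < ε) {k : ℕ} (hx : |x| ≤ k * ε) :
    ∃ a : ℤ, |a| ≤ k ∧ |x - ε * a| ≤ ε / 2 := by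
  refine ⟨round (x / ε), abs_round_le_of_abs_le ?_, ?_⟩
  · rwa [abs_div, abs_of_pos hε, div_le_iff₀ hε, Int.cast_natCast]
  · calc |x - ε * round (x / ε)| = ε * |x / ε - round (x / ε)| := by
          rw [← abs_of_pos hε, ← abs_mul, abs_of_pos hε, mul_sub, mul_div_cancel₀ _ hε.ne']
      _ ≤ ε * (1 / 2) := by gcongr; exact abs_sub_round _
      _ = ε / 2 := by ring

lemma sqrt_sq_add_sq_lt {ε x y : ℝ} (hε : 0 < ε) (hx : |x| ≤ ε / 2) (hy : |y| ≤ ε / 2) :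
    Real.sqrt (x ^ 2 + y ^ 2) < ε := by
  rw [Real.sqrt_lt' hε, ← sq_abs x, ← sq_abs y]
  nlinarith [abs_nonneg x, abs_nonneg y]

theorem spiral_dense_in_square_general (k j : ℕ) (p : ℝ × ℝ)
    (hp1 : |p.1| ≤ (k : ℝ) * (2:ℝ) ^ (-(j:ℤ))) (hp2 : |p.2| ≤ (k : ℝ) * (2:ℝ) ^ (-(j:ℤ))) :
    ∃ q ∈ spiralSet k j,
      Real.sqrt ((p.1 - q.1) ^ 2 + (p.2 - q.2) ^ 2) < (2:ℝ) ^ (-(j:ℤ)) := by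
  have hε : (0 : ℝ) < 2 ^ (-(j:ℤ)) := by positivity
  obtain ⟨a, ha, hpa⟩ := exists_int_abs_le_abs_sub_mul_le hε hp1
  obtain ⟨b, hb, hpb⟩ := exists_int_abs_le_abs_sub_mul_le hε hp2
  exact ⟨_, smul_mem_spiralSet j (intCast_mem_spiralSet_zero ha hb),
    sqrt_sq_add_sq_lt hε hpa hpb⟩

/-- Every point of the axis-aligned square of side 2k·2^{-j} centered at the origin is at
(Euclidean) distance less than 2^{-j} from some point of the spiral S(k,j). -/
theorem spiral_dense_in_square (k j : ℕ) (hk : 1 ≤ k) (hj : 1 ≤ j) (p : ℝ × ℝ)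
    (hp1 : |p.1| ≤ (k : ℝ) * (2:ℝ) ^ (-(j:ℤ))) (hp2 : |p.2| ≤ (k : ℝ) * (2:ℝ) ^ (-(j:ℤ))) :
    ∃ q ∈ spiralSet k j,
      Real.sqrt ((p.1 - q.1) ^ 2 + (p.2 - q.2) ^ 2) < (2:ℝ) ^ (-(j:ℤ)) :=
  spiral_dense_in_square_general k j p hp1 hp2
end
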